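/- arXiv:1402.1111 — 3 statements merged into one kernel-verified Lean document; each statement's English description precedes it below -/
import Mathlib

section
/- If $f : E \to \mathbb{C}$ is Hölder continuous on a bounded set $E \subset \mathbb{C}$ (i.e., $|f(x)-f(y)| \le M|x-y|^{\alpha}$ for some $M > 0$, $\alpha \in (0,1]$) and $E$ has transfinite diameter zero, then $f(E)$ has transfinite diameter zero. -/
open Filter

/-- `V_n(E)`: the supremum of products of pairwise distances over `n`-point
collections in `E`. -/
noncomputable def VnC (E : Set ℂ) (n : ℕ) : ℝ :=
  sSup {v : ℝ | ∃ z : Fin n → ℂ, (∀ i, z i ∈ E) ∧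
    v = ∏ p ∈ Finset.univ.filter (fun p : Fin n × Fin n => p.1 < p.2), dist (z p.1) (z p.2)}

/-- The sequence `V_n(E)^{2/(n(n-1))}` whose limit is the transfinite diameter. -/
noncomputable def dseqC (E : Set ℂ) (n : ℕ) : ℝ :=
  VnC E n ^ ((2 : ℝ) / ((n : ℝ) * ((n : ℝ) - 1)))

/-!
Each of the `n(n-1)/2` distances in a product of pairwise distances of points of `f(E)` is at
most `M |x - y|^α` for preimages `x, y ∈ E`, so `V_n(f(E)) ≤ M^{n(n-1)/2} V_n(E)^α`. Taking
`2/(n(n-1))`-th powers gives `d_n(f(E)) ≤ M d_n(E)^α`, which tends to `0` with `d_n(E)`.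
-/

lemma card_filter_fst_lt_snd (n : ℕ) :
    (Finset.univ.filter (fun p : Fin n × Fin n => p.1 < p.2)).card = n.choose 2 := by
  simpa using Fintype.card_product_filter_lt (α := Fin n)

section PairDistProd

variable {X : Type*} [PseudoMetricSpace X] {n : ℕ}

noncomputable def pairDistProd (z : Fin n → X) : ℝ :=
  ∏ p ∈ Finset.univ.filter (fun p : Fin n × Fin n => p.1 < p.2), dist (z p.1) (z p.2)

lemma pairDistProd_nonneg (z : Fin n → X) : 0 ≤ pairDistProd z :=
  Finset.prod_nonneg fun _ _ => dist_nonneg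

lemma pairDistProd_le_pow {z : Fin n → X} {C : ℝ} (hC : ∀ i j, dist (z i) (z j) ≤ C) :
    pairDistProd z ≤ C ^ n.choose 2 := by
  rw [← card_filter_fst_lt_snd, ← Finset.prod_const]
  exact Finset.prod_le_prod (fun _ _ => dist_nonneg) fun p _ => hC p.1 p.2

lemma pairDistProd_le_of_holder {Y : Type*} [PseudoMetricSpace Y] {w : Fin n → Y}
    {z : Fin n → X} {M α : ℝ} (h : ∀ i j, dist (w i) (w j) ≤ M * dist (z i) (z j) ^ α) :
    pairDistProd w ≤ M ^ n.choose 2 * pairDistProd z ^ α := by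
  unfold pairDistProd
  calc ∏ p ∈ Finset.univ.filter (fun p : Fin n × Fin n => p.1 < p.2), dist (w p.1) (w p.2)
      ≤ ∏ p ∈ Finset.univ.filter (fun p : Fin n × Fin n => p.1 < p.2),
          M * dist (z p.1) (z p.2) ^ α :=
        Finset.prod_le_prod (fun _ _ => dist_nonneg) fun p _ => h p.1 p.2
    _ = M ^ n.choose 2 * (∏ p ∈ Finset.univ.filter (fun p : Fin n × Fin n => p.1 < p.2),
          dist (z p.1) (z p.2)) ^ α := by
        rw [Finset.prod_mul_distrib, Finset.prod_const, card_filter_fst_lt_snd,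
          Real.finsetProd_rpow _ _ fun _ _ => dist_nonneg]

end PairDistProd

lemma VnC_nonneg (E : Set ℂ) (n : ℕ) : 0 ≤ VnC E n :=
  Real.sSup_nonneg fun _ ⟨z, _, hv⟩ => hv ▸ pairDistProd_nonneg z

lemma pairDistProd_le_VnC {E : Set ℂ} (hE : Bornology.IsBounded E) {n : ℕ} {z : Fin n → ℂ}
    (hz : ∀ i, z i ∈ E) : pairDistProd z ≤ VnC E n := by
  obtain ⟨C, hC⟩ := Metric.isBounded_iff.mp hE
  refine le_csSup ⟨C ^ n.choose 2, ?_⟩ ⟨z, hz, rfl⟩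
  rintro v ⟨y, hy, rfl⟩
  exact pairDistProd_le_pow fun i j => hC (hy i) (hy j)

lemma VnC_image_le_of_holder {E : Set ℂ} (hE : Bornology.IsBounded E) {f : ℂ → ℂ} {M α : ℝ}
    (hM : 0 ≤ M) (hα : 0 ≤ α) (hf : ∀ x ∈ E, ∀ y ∈ E, dist (f x) (f y) ≤ M * dist x y ^ α)
    (n : ℕ) : VnC (f '' E) n ≤ M ^ n.choose 2 * VnC E n ^ α := by
  refine Real.sSup_le ?_ (by have := VnC_nonneg E n; positivity)
  rintro v ⟨w, hw, rfl⟩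
  choose z hzE hzw using hw
  have hwz : w = f ∘ z := funext fun i => (hzw i).symm
  subst hwz
  calc pairDistProd (f ∘ z) ≤ M ^ n.choose 2 * pairDistProd z ^ α :=
        pairDistProd_le_of_holder fun i j => hf _ (hzE i) _ (hzE j)
    _ ≤ M ^ n.choose 2 * VnC E n ^ α := by
        gcongr
        · exact pairDistProd_nonneg z
        · exact pairDistProd_le_VnC hE hzE

lemma choose_two_mul_dseqC_exponent {n : ℕ} (hn : 2 ≤ n) :
    (n.choose 2 : ℝ) * (2 / ((n : ℝ) * ((n : ℝ) - 1))) = 1 := by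
  have hn' : (2 : ℝ) ≤ n := by exact_mod_cast hn
  rw [Nat.cast_choose_two]
  have : (n : ℝ) - 1 ≠ 0 := by linarith
  field_simp

lemma dseqC_image_le_of_holder {E : Set ℂ} (hE : Bornology.IsBounded E) {f : ℂ → ℂ} {M α : ℝ}
    (hM : 0 ≤ M) (hα : 0 ≤ α) (hf : ∀ x ∈ E, ∀ y ∈ E, dist (f x) (f y) ≤ M * dist x y ^ α)
    {n : ℕ} (hn : 2 ≤ n) : dseqC (f '' E) n ≤ M * dseqC E n ^ α := by
  set c : ℝ := 2 / ((n : ℝ) * ((n : ℝ) - 1))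
  have hc : 0 ≤ c := by
    have hn' : (2 : ℝ) ≤ n := by exact_mod_cast hn
    exact div_nonneg zero_le_two (by nlinarith)
  have hV := VnC_nonneg E n
  calc dseqC (f '' E) n ≤ (M ^ n.choose 2 * VnC E n ^ α) ^ c :=
        Real.rpow_le_rpow (VnC_nonneg _ n) (VnC_image_le_of_holder hE hM hα hf n) hc
    _ = M * dseqC E n ^ α := by
        rw [Real.mul_rpow (by positivity) (by positivity), ← Real.rpow_natCast,
          ← Real.rpow_mul hM, choose_two_mul_dseqC_exponent hn, Real.rpow_one,
          ← Real.rpow_mul hV, mul_comm α, Real.rpow_mul hV]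
        rfl

/-- A Hölder continuous image of a set of transfinite diameter zero has
transfinite diameter zero. -/
theorem transDiam_zero_of_holder (E : Set ℂ) (hE : Bornology.IsBounded E)
    (f : ℂ → ℂ) (M α : ℝ) (hM : 0 < M) (hα : α ∈ Set.Ioc (0 : ℝ) 1)
    (hf : ∀ x ∈ E, ∀ y ∈ E, dist (f x) (f y) ≤ M * dist x y ^ α)
    (h0 : Tendsto (fun n => dseqC E n) atTop (nhds 0)) :
    Tendsto (fun n => dseqC (f '' E) n) atTop (nhds 0) := by
  have hupper : Tendsto (fun n => M * dseqC E n ^ α) atTop (nhds 0) := by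
    have hpow := ((Real.continuousAt_rpow_const 0 α (Or.inr hα.1.le)).tendsto.comp h0).const_mul M
    simpa [Real.zero_rpow hα.1.ne', Function.comp_def] using hpow
  refine tendsto_of_tendsto_of_tendsto_of_le_of_le' tendsto_const_nhds hupper
    (Eventually.of_forall fun n => Real.rpow_nonneg (VnC_nonneg _ n) _) ?_
  filter_upwards [eventually_ge_atTop 2] with n hn
  exact dseqC_image_le_of_holder hE hM.le hα.1.le hf hn
end

section
/- Let $E \subseteq [a,b]$ be a measurable set and $x_0 \in E$. If for every $\varepsilon$-neighborhood one has $C([x_0-\varepsilon, x_0+\varepsilon] \setminus E)/C([x_0-\varepsilon, x_0+\varepsilon]) \to 0$ as $\varepsilon \to 0$ (i.e., $x_0$ is a density point of $E$ with respect to logarithmic capacity), then $x_0$ is a Lebesgue density point of $E$, i.e., $|(x_0-\varepsilon, x_0+\varepsilon)\setminus E|/(2\varepsilon) \to 0$. -/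
/-!
If `S_ε = [x₀ - ε, x₀ + ε] \ E` has capacity density tending to zero, the upper estimate for the
capacity of intervals gives `C(S_ε) = o(1 / log(1/ε))`. Once `C(S_ε) ≤ (A/2) / log(1/ε)`, the lower
estimate `C(S) ≥ A / log(1/|S|)` forces `log(1/|S_ε|) ≥ 2 log(1/ε)`, i.e. `|S_ε| ≤ ε²`, far more
than a Lebesgue density point needs.
-/

open MeasureTheory Filter Set Asymptotics Topology

lemma inv_log_one_div_pos {x : ℝ} (hx0 : 0 < x) (hx1 : x < 1) : 0 < (Real.log (1 / x))⁻¹ :=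
  inv_pos.mpr (Real.log_pos (one_lt_one_div hx0 hx1))

lemma isLittleO_inv_log_of_tendsto_div {f g : ℝ → ℝ} {c δ₁ : ℝ} (hc : 0 < c) (hδ₁ : 0 < δ₁)
    (hg : ∀ δ ∈ Ioo (0 : ℝ) δ₁,
      (1 / c) * (Real.log (1 / δ))⁻¹ ≤ g δ ∧ g δ ≤ c * (Real.log (1 / δ))⁻¹)
    (hfg : Tendsto (fun ε => f ε / g ε) (𝓝[>] 0) (𝓝 0)) :
    f =o[𝓝[>] 0] fun ε => (Real.log (1 / ε))⁻¹ := by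
  have hsmall : ∀ᶠ ε in 𝓝[>] (0 : ℝ), ε ∈ Ioo 0 (min δ₁ 1) :=
    Ioo_mem_nhdsGT (lt_min hδ₁ one_pos)
  have hbounds : ∀ᶠ ε in 𝓝[>] (0 : ℝ), 0 < (Real.log (1 / ε))⁻¹ ∧
      (1 / c) * (Real.log (1 / ε))⁻¹ ≤ g ε ∧ g ε ≤ c * (Real.log (1 / ε))⁻¹ := by
    filter_upwards [hsmall] with ε ⟨hε0, hε⟩
    rw [lt_min_iff] at hε
    exact ⟨inv_log_one_div_pos hε0 hε.2, hg ε ⟨hε0, hε.1⟩⟩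
  have hg_pos : ∀ᶠ ε in 𝓝[>] (0 : ℝ), 0 < g ε := by
    filter_upwards [hbounds] with ε ⟨hL, hlo, _⟩
    exact (mul_pos (one_div_pos.mpr hc) hL).trans_le hlo
  have hfg' : f =o[𝓝[>] 0] g :=
    (isLittleO_iff_tendsto' (hg_pos.mono fun ε hε h => absurd h hε.ne')).mpr hfg
  refine hfg'.trans_isBigO (IsBigO.of_bound c ?_)
  filter_upwards [hbounds, hg_pos] with ε ⟨hL, _, hhi⟩ hg0
  rwa [Real.norm_of_nonneg hg0.le, Real.norm_of_nonneg hL.le]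

lemma toReal_measure_le_sq_of_le_inv_log {α : Type*} [MeasurableSpace α] {μ : Measure α}
    {C : Set α → ℝ} {A δ₀ : ℝ} (hA : 0 < A)
    (hest : ∀ S : Set α, MeasurableSet S → 0 < μ S → μ S < ENNReal.ofReal δ₀ →
      A / Real.log (1 / (μ S).toReal) ≤ C S)
    {S : Set α} (hS : MeasurableSet S) (hSδ₀ : μ S < ENNReal.ofReal δ₀) (hS1 : μ S < 1)
    {ε : ℝ} (hε : 0 < ε) (hCS : C S ≤ A / 2 * (Real.log (1 / ε))⁻¹) :
    (μ S).toReal ≤ ε ^ 2 := by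
  by_contra! hlt
  set m := (μ S).toReal
  have hm0 : 0 < m := lt_trans (by positivity) hlt
  have hm1 : m < 1 := ENNReal.toReal_lt_of_lt_ofReal (by rwa [ENNReal.ofReal_one])
  have hlog_m : 0 < Real.log (1 / m) := Real.log_pos (one_lt_one_div hm0 hm1)
  have hlog_lt : Real.log (1 / m) < 2 * Real.log (1 / ε) := by
    have hlog_sq := Real.log_lt_log (by positivity) hlt
    rw [Real.log_pow, Nat.cast_ofNat] at hlog_sq
    rw [one_div, Real.log_inv, one_div, Real.log_inv]
    linarith
  have hcap : A / Real.log (1 / m) ≤ C S :=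
    hest S hS (ENNReal.toReal_pos_iff.mp hm0).1 hSδ₀
  have : A / 2 * (Real.log (1 / ε))⁻¹ < A / Real.log (1 / m) := by
    rw [← div_eq_mul_inv, div_div]
    exact div_lt_div_of_pos_left hA hlog_m hlog_lt
  linarith

lemma tendsto_div_two_mul_of_le_sq {f : ℝ → ℝ} (hf0 : ∀ ε, 0 ≤ f ε)
    (hf : ∀ᶠ ε in 𝓝[>] (0 : ℝ), f ε ≤ ε ^ 2) :
    Tendsto (fun ε => f ε / (2 * ε)) (𝓝[>] 0) (𝓝 0) := by
  have hhalf : Tendsto (fun ε : ℝ => ε / 2) (𝓝[>] 0) (𝓝 0) := by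
    simpa using ((continuous_id.div_const 2).tendsto (0 : ℝ)).mono_left nhdsWithin_le_nhds
  refine squeeze_zero' ?_ ?_ hhalf
  · filter_upwards [self_mem_nhdsWithin] with ε (hε0 : 0 < ε)
    exact div_nonneg (hf0 ε) (by positivity)
  · filter_upwards [hf, self_mem_nhdsWithin] with ε hε (hε0 : 0 < ε)
    calc f ε / (2 * ε) ≤ ε ^ 2 / (2 * ε) := by gcongr
      _ = ε / 2 := by field_simp

theorem lebesgue_density_of_cap_density_general (C : Set ℝ → ℝ)
    (E : Set ℝ) (hE : MeasurableSet E)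
    (x₀ : ℝ)
    (A δ₀ : ℝ) (hA : 0 < A) (hδ₀ : 0 < δ₀)
    (hest : ∀ S : Set ℝ, MeasurableSet S → 0 < volume S → volume S < ENNReal.ofReal δ₀ →
      A / Real.log (1 / (volume S).toReal) ≤ C S)
    (c δ₁ : ℝ) (hc : 1 ≤ c) (hδ₁ : 0 < δ₁)
    (hIcc : ∀ δ ∈ Set.Ioo (0 : ℝ) δ₁,
      (1 / c) * (Real.log (1 / δ))⁻¹ ≤ C (Set.Icc (x₀ - δ) (x₀ + δ)) ∧
      C (Set.Icc (x₀ - δ) (x₀ + δ)) ≤ c * (Real.log (1 / δ))⁻¹)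
    (hdisp : Tendsto (fun ε : ℝ =>
        C (Set.Icc (x₀ - ε) (x₀ + ε) \ E) / C (Set.Icc (x₀ - ε) (x₀ + ε)))
      (nhdsWithin 0 (Set.Ioi 0)) (nhds 0)) :
    Tendsto (fun ε : ℝ => (volume (Set.Ioo (x₀ - ε) (x₀ + ε) \ E)).toReal / (2 * ε))
      (nhdsWithin 0 (Set.Ioi 0)) (nhds 0) := by
  have hcap := (isLittleO_inv_log_of_tendsto_div (by linarith) hδ₁ hIcc hdisp).bound
    (half_pos hA)
  refine tendsto_div_two_mul_of_le_sq (fun ε => ENNReal.toReal_nonneg) ?_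
  filter_upwards [hcap, Ioo_mem_nhdsGT (one_half_pos : (0 : ℝ) < 1 / 2),
    Ioo_mem_nhdsGT (half_pos hδ₀)] with ε hCS ⟨hε0, hε1⟩ ⟨_, hεδ₀⟩
  have hvol : volume (Icc (x₀ - ε) (x₀ + ε) \ E) ≤ ENNReal.ofReal (2 * ε) :=
    (measure_mono sdiff_subset).trans_eq (by rw [Real.volume_Icc]; ring_nf)
  have hlt : ∀ r, 2 * ε < r → volume (Icc (x₀ - ε) (x₀ + ε) \ E) < ENNReal.ofReal r :=
    fun r hr => hvol.trans_lt ((ENNReal.ofReal_lt_ofReal_iff (by linarith)).mpr hr)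
  rw [Real.norm_eq_abs, Real.norm_eq_abs,
    abs_of_pos (inv_log_one_div_pos hε0 (by linarith))] at hCS
  calc (volume (Ioo (x₀ - ε) (x₀ + ε) \ E)).toReal
      ≤ (volume (Icc (x₀ - ε) (x₀ + ε) \ E)).toReal :=
        ENNReal.toReal_mono (hlt 1 (by linarith)).ne_top
          (measure_mono (sdiff_subset_sdiff_left Ioo_subset_Icc_self))
    _ ≤ ε ^ 2 := toReal_measure_le_sq_of_le_inv_log hA hest (measurableSet_Icc.diff hE)
        (hlt δ₀ (by linarith)) (by simpa using hlt 1 (by linarith)) hε0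
        ((le_abs_self _).trans hCS)

/-- A density point with respect to logarithmic capacity is a Lebesgue density
point. Here `C` is the logarithmic capacity, assumed to satisfy the standard
estimates: `C(S) ≥ A / log(1/|S|)` for measurable sets of small positive
Lebesgue measure, and `C([x₀-δ, x₀+δ]) ≍ (log(1/δ))⁻¹` for small `δ`. -/
theorem lebesgue_density_of_cap_density (C : Set ℝ → ℝ)
    (a b : ℝ) (E : Set ℝ) (hE : MeasurableSet E) (hEs : E ⊆ Set.Icc a b)
    (x₀ : ℝ) (hx₀ : x₀ ∈ E)
    (A δ₀ : ℝ) (hA : 0 < A) (hδ₀ : 0 < δ₀)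
    (hest : ∀ S : Set ℝ, MeasurableSet S → 0 < volume S → volume S < ENNReal.ofReal δ₀ →
      A / Real.log (1 / (volume S).toReal) ≤ C S)
    (c δ₁ : ℝ) (hc : 1 ≤ c) (hδ₁ : 0 < δ₁)
    (hIcc : ∀ δ ∈ Set.Ioo (0 : ℝ) δ₁,
      (1 / c) * (Real.log (1 / δ))⁻¹ ≤ C (Set.Icc (x₀ - δ) (x₀ + δ)) ∧
      C (Set.Icc (x₀ - δ) (x₀ + δ)) ≤ c * (Real.log (1 / δ))⁻¹)
    (hdisp : Tendsto (fun ε : ℝ =>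
        C (Set.Icc (x₀ - ε) (x₀ + ε) \ E) / C (Set.Icc (x₀ - ε) (x₀ + ε)))
      (nhdsWithin 0 (Set.Ioi 0)) (nhds 0)) :
    Tendsto (fun ε : ℝ => (volume (Set.Ioo (x₀ - ε) (x₀ + ε) \ E)).toReal / (2 * ε))
      (nhdsWithin 0 (Set.Ioi 0)) (nhds 0) :=
  lebesgue_density_of_cap_density_general C E hE x₀ A δ₀ hA hδ₀ hest c δ₁ hc hδ₁ hIcc hdisp
end

section
/- Every continuous function $\Lambda : [0,2\pi] \to \{z \in \mathbb{C} : |z| = 1\}$ of bounded variation admits a continuous argument function of bounded variation: there exists $\gamma : [0,2\pi] \to \mathbb{R}$ of bounded variation with $\Lambda(\vartheta) = e^{i\gamma(\vartheta)}$ for all $\vartheta$, and moreover $V(\gamma) \le (3\pi/2) \cdot V(\Lambda)$ can be achieved; more generally, every (not necessarily continuous) function $\lambda : \partial\mathbb{D} \to \partial\mathbb{D}$ of bounded variation has an argument function $\alpha_\lambda : \partial\mathbb{D} \to \mathbb{R}$ of bounded variation with $\lambda(\zeta) = e^{i\alpha_\lambda(\zeta)}$. -/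
/-!
If `Λ` stays within distance `< 1` of a point `z` of the unit circle, then
`w ↦ arg z + arg (w z̄)` is a branch of the argument along `Λ` which is continuous and, since an
arc of angle at most `π` is at most `π / 2` times its chord, `(π / 2)`-Lipschitz; composing it
with `Λ` gives a lift whose variation is at most `(π / 2) V(Λ)`. A function of bounded variation
admits a finite partition whose open intervals each carry variation `≤ 1 / 2`. On each closed
piece the two endpoints add only finite jumps (none when `Λ` is continuous), and lifts on
consecutive pieces are glued after shifting one of them by a multiple of `2π`.
-/

open Set Real Filter Topology ComplexConjugate
open scoped ENNReal

namespace Complex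

lemma exp_arg_mul_I_of_norm_eq_one {w : ℂ} (hw : ‖w‖ = 1) : exp (arg w * I) = w := by
  simpa [hw] using norm_mul_exp_arg_mul_I w

lemma abs_sub_le_pi_div_two_mul_norm_exp_sub {x y : ℝ} (h : |x - y| ≤ π) :
    |x - y| ≤ π / 2 * ‖exp (x * I) - exp (y * I)‖ := by
  have hsin : 2 / π * |(x - y) / 2| ≤ |Real.sin ((x - y) / 2)| :=
    mul_abs_le_abs_sin (by rw [abs_div, abs_two]; linarith)
  have hnorm : ‖exp (x * I) - exp (y * I)‖ = 2 * |Real.sin ((x - y) / 2)| := by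
    have : exp (x * I) - exp (y * I) = exp (y * I) * (exp (I * ↑(x - y)) - 1) := by
      rw [mul_sub, ← exp_add]; push_cast; ring_nf
    rw [this, norm_mul, norm_exp_ofReal_mul_I, one_mul, norm_exp_I_mul_ofReal_sub_one, norm_mul,
      Real.norm_two, Real.norm_eq_abs]
  rw [hnorm]
  rw [abs_div, abs_two] at hsin
  have := pi_pos
  calc |x - y| = π / 2 * (2 * (2 / π * (|x - y| / 2))) := by field_simp
    _ ≤ _ := by gcongr

lemma lipschitzOnWith_arg :
    LipschitzOnWith (π / 2).toNNReal arg {w : ℂ | ‖w‖ = 1 ∧ 0 ≤ w.re} := by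
  refine LipschitzOnWith.of_dist_le_mul fun u ⟨hu, hu'⟩ v ⟨hv, hv'⟩ => ?_
  have hu_arg := abs_arg_le_pi_div_two_iff.2 hu'
  have hv_arg := abs_arg_le_pi_div_two_iff.2 hv'
  rw [Real.coe_toNNReal _ (by positivity), Real.dist_eq, dist_eq_norm]
  nth_rw 2 [← exp_arg_mul_I_of_norm_eq_one hu, ← exp_arg_mul_I_of_norm_eq_one hv]
  exact abs_sub_le_pi_div_two_mul_norm_exp_sub (by linarith [abs_sub (arg u) (arg v)])

/-- The branch of the argument whose cut is the ray through `-z`. -/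
noncomputable def argNear (z w : ℂ) : ℝ := arg z + arg (w * conj z)

variable {z w : ℂ}

lemma exp_argNear_mul_I (hz : ‖z‖ = 1) (hw : ‖w‖ = 1) : exp (argNear z w * I) = w := by
  have hwz : ‖w * conj z‖ = 1 := by rw [norm_mul, RCLike.norm_conj, hw, hz, one_mul]
  rw [argNear, ofReal_add, add_mul, exp_add, exp_arg_mul_I_of_norm_eq_one hz,
    exp_arg_mul_I_of_norm_eq_one hwz, mul_left_comm, mul_conj, normSq_eq_norm_sq, hz]
  simp

lemma re_mul_conj_pos (hz : ‖z‖ = 1) (hw : ‖w - z‖ < 1) : 0 < (w * conj z).re := by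
  have h : w * conj z = 1 + (w - z) * conj z := by
    rw [sub_mul, mul_conj, normSq_eq_norm_sq, hz]; push_cast; ring
  have := abs_re_le_norm ((w - z) * conj z)
  rw [norm_mul, RCLike.norm_conj, hz, mul_one] at this
  rw [h, add_re, one_re]
  linarith [neg_abs_le ((w - z) * conj z).re]

lemma lipschitzOnWith_argNear (hz : ‖z‖ = 1) :
    LipschitzOnWith (π / 2).toNNReal (argNear z) {w | ‖w‖ = 1 ∧ ‖w - z‖ < 1} := by
  refine LipschitzOnWith.of_dist_le_mul fun u ⟨hu, hu'⟩ v ⟨hv, hv'⟩ => ?_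
  have hmul : ∀ {w}, ‖w‖ = 1 → ‖w - z‖ < 1 → w * conj z ∈ {w : ℂ | ‖w‖ = 1 ∧ 0 ≤ w.re} :=
    fun hw hw' => ⟨by rw [norm_mul, RCLike.norm_conj, hw, hz, one_mul],
      (re_mul_conj_pos hz hw').le⟩
  have := lipschitzOnWith_arg.dist_le_mul _ (hmul hu hu') _ (hmul hv hv')
  rwa [dist_eq_norm (u * conj z), ← sub_mul, norm_mul, RCLike.norm_conj, hz, mul_one,
    ← dist_eq_norm, ← dist_add_left (arg z)] at this

lemma continuousAt_argNear (hz : ‖z‖ = 1) (hw : ‖w - z‖ < 1) : ContinuousAt (argNear z) w :=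
  continuousAt_const.add <|
    (continuousAt_arg (Or.inl (re_mul_conj_pos hz hw))).comp (f := (· * conj z))
      (continuous_mul_const _).continuousAt

end Complex

section Variation

variable {α E : Type*} [LinearOrder α] {f : α → E} {a b : α}

lemma eVariationOn_add_const [SeminormedAddCommGroup E] (c : E) (s : Set α) :
    eVariationOn (fun x => f x + c) s = eVariationOn f s := by
  simp [eVariationOn, edist_add_right]

lemma eVariationOn_Icc_add_Icc [PseudoEMetricSpace E] {c : α} (hab : a ≤ b) (hbc : b ≤ c) :
    eVariationOn f (Icc a b) + eVariationOn f (Icc b c) = eVariationOn f (Icc a c) := by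
  simpa using eVariationOn.Icc_add_Icc f (s := univ) hab hbc (mem_univ b)

variable [TopologicalSpace α] [OrderTopology α] [DenselyOrdered α]

lemma eVariationOn_Icc_eq_of_tendsto [PseudoEMetricSpace E] (hab : a < b) {l₁ l₂ : E}
    (h₁ : Tendsto f (𝓝[>] a) (𝓝 l₁)) (h₂ : Tendsto f (𝓝[<] b) (𝓝 l₂)) :
    eVariationOn f (Icc a b) = edist (f a) l₁ + eVariationOn f (Ioo a b) + edist (f b) l₂ := by
  have hIoc_Iio : Ioc a b ∩ Iio b = Ioo a b := by
    ext; simp only [mem_inter_iff, mem_Ioc, mem_Iio, mem_Ioo]; grind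
  have hIcc_Ioi : Icc a b ∩ Ioi a = Ioc a b := by
    ext; simp only [mem_inter_iff, mem_Icc, mem_Ioi, mem_Ioc]; grind
  have hV_Ioc : eVariationOn f (Ioc a b) = eVariationOn f (Ioo a b) + edist (f b) l₂ := by
    have hb : (𝓝[Ioc a b ∩ Iio b] b) = 𝓝[<] b := by rw [hIoc_Iio, nhdsWithin_Ioo_eq_nhdsLT hab]
    have := eVariationOn.eVariationOn_on_inter_Iic_eq_Iio_add_edist (f := f) (s := Ioc a b)
      (a := b) (hb ▸ nhdsLT_neBot_of_exists_lt ⟨a, hab⟩) ⟨hab, le_rfl⟩ (hb ▸ h₂)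
    rwa [hIoc_Iio, inter_eq_left.2 Ioc_subset_Iic_self] at this
  have ha : (𝓝[Icc a b ∩ Ioi a] a) = 𝓝[>] a := by
    rw [hIcc_Ioi, nhdsWithin_Ioc_eq_nhdsGT hab]
  have := eVariationOn.eVariationOn_on_inter_Ici_eq_Ioi_add_edist (f := f) (s := Icc a b)
    (a := a) (ha ▸ nhdsGT_neBot_of_exists_gt ⟨b, hab⟩) ⟨le_rfl, hab.le⟩ (ha ▸ h₁)
  rw [inter_eq_left.2 Icc_subset_Ici_self, hIcc_Ioi, hV_Ioc] at this
  rw [this]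
  ring

lemma BoundedVariationOn.Icc_of_Ioo [PseudoMetricSpace E] [CompleteSpace E]
    (hf : BoundedVariationOn f (Ioo a b)) : BoundedVariationOn f (Icc a b) := by
  rcases le_or_gt b a with hba | hab
  · exact BoundedVariationOn.of_subsingleton (subsingleton_Icc_of_ge hba)
  obtain ⟨l₁, h₁⟩ := hf.exists_tendsto_right a
  obtain ⟨l₂, h₂⟩ := hf.exists_tendsto_left b
  rw [inter_eq_left.2 Ioo_subset_Ioi_self, nhdsWithin_Ioo_eq_nhdsGT hab] at h₁
  rw [inter_eq_left.2 Ioo_subset_Iio_self, nhdsWithin_Ioo_eq_nhdsLT hab] at h₂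
  rw [BoundedVariationOn, eVariationOn_Icc_eq_of_tendsto hab h₁ h₂]
  exact ENNReal.add_ne_top.2 ⟨ENNReal.add_ne_top.2 ⟨edist_ne_top _ _, hf⟩, edist_ne_top _ _⟩

lemma eVariationOn_Ioo_eq_Icc_of_continuousOn [PseudoEMetricSpace E]
    (hf : ContinuousOn f (Icc a b)) : eVariationOn f (Ioo a b) = eVariationOn f (Icc a b) := by
  rcases le_or_gt b a with hba | hab
  · have hs := subsingleton_Icc_of_ge hba
    rw [eVariationOn.subsingleton f hs,
      eVariationOn.subsingleton f (hs.anti Ioo_subset_Icc_self)]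
  have h₁ : Tendsto f (𝓝[>] a) (𝓝 (f a)) := (hf a (left_mem_Icc.2 hab.le)).mono_left <| by
    rw [← nhdsWithin_Ioc_eq_nhdsGT hab]; exact nhdsWithin_mono _ Ioc_subset_Icc_self
  have h₂ : Tendsto f (𝓝[<] b) (𝓝 (f b)) := (hf b (right_mem_Icc.2 hab.le)).mono_left <| by
    rw [← nhdsWithin_Ico_eq_nhdsLT hab]; exact nhdsWithin_mono _ Ico_subset_Icc_self
  simp [eVariationOn_Icc_eq_of_tendsto hab h₁ h₂]

end Variation

theorem exists_monotone_eVariationOn_Ioo_le {α E : Type*} [ConditionallyCompleteLinearOrder α]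
    [PseudoEMetricSpace E] {f : α → E} {a b : α} (hab : a ≤ b)
    (hf : BoundedVariationOn f (Icc a b)) {ε : ℝ≥0∞} (hε : ε ≠ 0) :
    ∃ (n : ℕ) (τ : ℕ → α), Monotone τ ∧ τ 0 = a ∧ τ n = b ∧
      ∀ i, eVariationOn f (Ioo (τ i) (τ (i + 1))) ≤ ε := by
  set v : α → ℝ≥0∞ := fun x => eVariationOn f (Icc a x)
  have hv_le : ∀ x ∈ Icc a b, v x ≤ eVariationOn f (Icc a b) :=
    fun x hx => eVariationOn.mono f (Icc_subset_Icc_right hx.2)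
  -- `τ k` is the first point where the variation accumulated from `a` reaches `k ε`, else `b`
  set S : ℕ → Set α := fun k => insert b {x | x ∈ Icc a b ∧ k * ε ≤ v x}
  have hS_lb : ∀ k, a ∈ lowerBounds (S k) := fun k => by
    rintro x (rfl | hx)
    exacts [hab, hx.1.1]
  have hS_anti : ∀ {k l : ℕ}, k ≤ l → S l ⊆ S k := by
    rintro k l hkl x (rfl | ⟨hx, hvx⟩)
    · exact mem_insert _ _
    · exact mem_insert_of_mem _ ⟨hx, le_trans (by gcongr) hvx⟩
  set τ : ℕ → α := fun k => sInf (S k)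
  have hτ_le : ∀ k, τ k ≤ b := fun k => csInf_le ⟨a, hS_lb k⟩ (mem_insert _ _)
  have hτ_ge : ∀ k, a ≤ τ k := fun k => le_csInf (insert_nonempty _ _) (hS_lb k)
  obtain ⟨N, hN⟩ := ENNReal.exists_nat_mul_gt hε hf
  refine ⟨N, τ, fun k l hkl => csInf_le_csInf ⟨a, hS_lb k⟩ (insert_nonempty _ _) (hS_anti hkl),
    IsLeast.csInf_eq ⟨mem_insert_of_mem _ ⟨⟨le_rfl, hab⟩, by simp⟩, hS_lb 0⟩,
    IsLeast.csInf_eq ⟨mem_insert _ _, ?_⟩, fun k => ?_⟩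
  · rintro x (rfl | ⟨hx, hvx⟩)
    · exact le_rfl
    · exact absurd (hvx.trans (hv_le x hx)) (not_le.2 hN)
  rw [eVariationOn.eq_biSup_inter_Icc]
  refine iSup₂_le fun ⟨x, y⟩ ⟨hx, hy, hxy⟩ => ?_
  refine (eVariationOn.mono f inter_subset_right).trans ?_
  obtain ⟨s, hs, hsx⟩ := exists_lt_of_csInf_lt (insert_nonempty _ _) hx.1
  have hks : k * ε ≤ v s := by
    rcases hs with rfl | hs
    · exact absurd (hsx.trans (hx.2.trans_le (hτ_le _))) (lt_irrefl _)
    · exact hs.2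
  have hy_mem : y ∈ Icc a b :=
    ⟨(hτ_ge k).trans (hx.1.trans_le hxy).le, hy.2.le.trans (hτ_le _)⟩
  have hky : v y < (k + 1 : ℕ) * ε := by
    by_contra! h
    exact (csInf_le ⟨a, hS_lb _⟩ (mem_insert_of_mem _ ⟨hy_mem, h⟩)).not_gt hy.2
  have hvx : v x ≠ ⊤ := ne_top_of_le_ne_top hf
    (hv_le x ⟨(hτ_ge k).trans hx.1.le, hxy.trans hy_mem.2⟩)
  refine ((ENNReal.add_lt_add_iff_left hvx).1 ?_).le
  calc v x + eVariationOn f (Icc x y) = v y :=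
        eVariationOn_Icc_add_Icc ((hτ_ge k).trans hx.1.le) hxy
    _ < k * ε + ε := by rwa [Nat.cast_succ, add_one_mul] at hky
    _ ≤ v x + ε := by
        gcongr
        exact hks.trans (eVariationOn.mono f (Icc_subset_Icc_right hsx.le))

/-- The continuity clause is conditional so that one lift serves both the general and the
continuous case. -/
def HasBVArgOn (Λ : ℝ → ℂ) (s : Set ℝ) : Prop :=
  ∃ γ : ℝ → ℝ, (∀ θ ∈ s, Λ θ = Complex.exp (γ θ * Complex.I)) ∧ BoundedVariationOn γ s ∧
    (ContinuousOn Λ s →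
      ContinuousOn γ s ∧ eVariationOn γ s ≤ ENNReal.ofReal (π / 2) * eVariationOn Λ s)

namespace HasBVArgOn

open Complex

variable {Λ : ℝ → ℂ} {a b c : ℝ}

lemma Icc_trans (hab : a ≤ b) (hbc : b ≤ c) (h₁ : HasBVArgOn Λ (Icc a b))
    (h₂ : HasBVArgOn Λ (Icc b c)) : HasBVArgOn Λ (Icc a c) := by
  obtain ⟨α, hα_arg, hα_bv, hα_cont⟩ := h₁
  obtain ⟨β, hβ_arg, hβ_bv, hβ_cont⟩ := h₂
  -- `α b - β b` is a multiple of `2π`: the shifted `β'` is still a lift, and equals `α` at `b`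
  set β' : ℝ → ℝ := fun θ => β θ + (α b - β b)
  have hβ'_arg : ∀ θ ∈ Icc b c, Λ θ = exp (β' θ * I) := by
    intro θ hθ
    have hb : exp (α b * I) = exp (β b * I) := by
      rw [← hα_arg b ⟨hab, le_rfl⟩, ← hβ_arg b ⟨le_rfl, hbc⟩]
    simp only [β']
    push_cast
    rw [add_mul, Complex.exp_add, sub_mul, Complex.exp_sub, hb, div_self (Complex.exp_ne_zero _),
      mul_one, hβ_arg θ hθ]
  set γ : ℝ → ℝ := fun θ => if θ ≤ b then α θ else β' θ
  have hγα : EqOn γ α (Icc a b) := fun θ hθ => if_pos hθ.2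
  have hγβ : EqOn γ β' (Icc b c) := fun θ hθ => by
    rcases hθ.1.eq_or_lt with rfl | h
    · simp [γ, β']
    · exact if_neg (not_le.2 h)
  have hV : eVariationOn γ (Icc a c) = eVariationOn α (Icc a b) + eVariationOn β (Icc b c) := by
    rw [← eVariationOn_Icc_add_Icc hab hbc, eVariationOn.eq_of_eqOn hγα,
      eVariationOn.eq_of_eqOn hγβ, eVariationOn_add_const]
  refine ⟨γ, fun θ hθ => ?_, ?_, fun hc => ?_⟩
  · rcases le_total θ b with h | h
    · rw [hγα ⟨hθ.1, h⟩]; exact hα_arg θ ⟨hθ.1, h⟩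
    · rw [hγβ ⟨h, hθ.2⟩]; exact hβ'_arg θ ⟨h, hθ.2⟩
  · rw [BoundedVariationOn, hV]
    exact ENNReal.add_ne_top.2 ⟨hα_bv, hβ_bv⟩
  obtain ⟨hα_c, hα_V⟩ := hα_cont (hc.mono (Icc_subset_Icc_right hbc))
  obtain ⟨hβ_c, hβ_V⟩ := hβ_cont (hc.mono (Icc_subset_Icc_left hab))
  refine ⟨?_, ?_⟩
  · rw [← Icc_union_Icc_eq_Icc hab hbc]
    exact (hα_c.congr hγα).union_of_isClosed ((hβ_c.add continuousOn_const).congr hγβ)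
      isClosed_Icc isClosed_Icc
  · rw [hV, ← eVariationOn_Icc_add_Icc hab hbc, mul_add]
    gcongr

end HasBVArgOn

open Complex in
lemma hasBVArgOn_Icc_of_eVariationOn_Ioo_lt_one {Λ : ℝ → ℂ} {a b : ℝ} (hab : a ≤ b)
    (hΛ : ∀ θ ∈ Icc a b, ‖Λ θ‖ = 1) (hV : eVariationOn Λ (Ioo a b) < 1) :
    HasBVArgOn Λ (Icc a b) := by
  set m := (a + b) / 2 with hm_def
  have hm : m ∈ Icc a b := ⟨by linarith, by linarith⟩
  set z := Λ m
  have hz : ‖z‖ = 1 := hΛ m hm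
  have hnear : ∀ s, m ∈ s → eVariationOn Λ s < 1 → ∀ θ ∈ s, ‖Λ θ - z‖ < 1 := by
    intro s hms hs θ hθ
    have := (eVariationOn.edist_le Λ hθ hms).trans_lt hs
    rwa [← ENNReal.ofReal_one, edist_lt_ofReal, dist_eq_norm] at this
  have hIoo : ∀ θ ∈ Ioo a b, ‖Λ θ - z‖ < 1 := fun θ hθ =>
    hnear (Ioo a b) ⟨by linarith [hθ.1, hθ.2], by linarith [hθ.1, hθ.2]⟩ hV θ hθ
  -- the branch `argNear z` is valid on `Ioo a b`, and at the endpoints when `Λ` is continuous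
  set γ : ℝ → ℝ := fun θ => if ‖Λ θ - z‖ < 1 then argNear z (Λ θ) else arg (Λ θ)
  have hγ : ∀ s ⊆ Icc a b, (∀ θ ∈ s, ‖Λ θ - z‖ < 1) →
      EqOn γ (argNear z ∘ Λ) s ∧ eVariationOn γ s ≤ ENNReal.ofReal (π / 2) * eVariationOn Λ s :=
    fun s hs hsz => ⟨fun θ hθ => if_pos (hsz θ hθ), by
      rw [eVariationOn.eq_of_eqOn fun θ hθ => if_pos (hsz θ hθ)]
      exact (lipschitzOnWith_argNear hz).comp_eVariationOn_le
        fun θ hθ => ⟨hΛ θ (hs hθ), hsz θ hθ⟩⟩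
  refine ⟨γ, fun θ hθ => ?_, ?_, fun hc => ?_⟩
  · simp only [γ]
    split_ifs
    · exact (exp_argNear_mul_I hz (hΛ θ hθ)).symm
    · exact (exp_arg_mul_I_of_norm_eq_one (hΛ θ hθ)).symm
  · refine BoundedVariationOn.Icc_of_Ioo <| ne_top_of_le_ne_top
      (ENNReal.mul_ne_top ENNReal.ofReal_ne_top hV.ne_top) (hγ _ Ioo_subset_Icc_self hIoo).2
  · have hIcc := hnear _ hm (by rwa [← eVariationOn_Ioo_eq_Icc_of_continuousOn hc])
    obtain ⟨hγ_eq, hγ_V⟩ := hγ _ subset_rfl hIcc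
    exact ⟨ContinuousOn.congr (fun θ hθ =>
      (continuousAt_argNear hz (hIcc θ hθ)).comp_continuousWithinAt (hc θ hθ)) hγ_eq, hγ_V⟩

lemma hasBVArgOn_Icc {Λ : ℝ → ℂ} {a b : ℝ} (hab : a ≤ b) (hΛ : ∀ θ ∈ Icc a b, ‖Λ θ‖ = 1)
    (hBV : BoundedVariationOn Λ (Icc a b)) : HasBVArgOn Λ (Icc a b) := by
  obtain ⟨n, τ, hτ, rfl, rfl, hsmall⟩ :=
    exists_monotone_eVariationOn_Ioo_le hab hBV (ε := 2⁻¹) (by norm_num)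
  have hΛ' : ∀ i k, k ≤ n → ∀ θ ∈ Icc (τ i) (τ k), ‖Λ θ‖ = 1 := fun i _ hk θ hθ =>
    hΛ θ ⟨(hτ (Nat.zero_le i)).trans hθ.1, hθ.2.trans (hτ hk)⟩
  suffices ∀ k ≤ n, HasBVArgOn Λ (Icc (τ 0) (τ k)) from this n le_rfl
  intro k hk
  induction k with
  | zero => exact hasBVArgOn_Icc_of_eVariationOn_Ioo_lt_one le_rfl (hΛ' 0 0 hk) (by simp)
  | succ k ih =>
    exact (ih (by omega)).Icc_trans (hτ (Nat.zero_le k)) (hτ k.le_succ)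
      (hasBVArgOn_Icc_of_eVariationOn_Ioo_lt_one (hτ k.le_succ) (hΛ' k (k + 1) hk)
        ((hsmall k).trans_lt (by norm_num)))

theorem exists_BV_argument_general (Λ : ℝ → ℂ)
    (hmap : ∀ θ ∈ Icc (0 : ℝ) (2 * π), ‖Λ θ‖ = 1)
    (hBV : BoundedVariationOn Λ (Icc 0 (2 * π))) :
    (ContinuousOn Λ (Icc 0 (2 * π)) →
      ∃ γ : ℝ → ℝ, ContinuousOn γ (Icc 0 (2 * π)) ∧
        BoundedVariationOn γ (Icc 0 (2 * π)) ∧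
        (∀ θ ∈ Icc (0 : ℝ) (2 * π), Λ θ = Complex.exp (γ θ * Complex.I)) ∧
        eVariationOn γ (Icc 0 (2 * π)) ≤
          ENNReal.ofReal (3 * π / 2) * eVariationOn Λ (Icc 0 (2 * π))) ∧
    (∃ α : ℝ → ℝ, BoundedVariationOn α (Icc 0 (2 * π)) ∧
      ∀ θ ∈ Icc (0 : ℝ) (2 * π), Λ θ = Complex.exp (α θ * Complex.I)) := by
  obtain ⟨γ, hγ_arg, hγ_bv, hγ_cont⟩ := hasBVArgOn_Icc (by positivity) hmap hBV
  refine ⟨fun hc => ?_, γ, hγ_bv, hγ_arg⟩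
  obtain ⟨hγ_c, hγ_V⟩ := hγ_cont hc
  refine ⟨γ, hγ_c, hγ_bv, hγ_arg, hγ_V.trans ?_⟩
  gcongr
  linarith [pi_pos]

/-- Every function of bounded variation from the circle (parametrized by
`Λ(θ) = λ(e^{iθ})`, `θ ∈ [0,2π]`, with `Λ(2π) = Λ(0)`) into the unit circle
admits an argument function of bounded variation; when `Λ` is continuous the
argument can be chosen continuous with `V(γ) ≤ (3π/2)·V(Λ)`. -/
theorem exists_BV_argument (Λ : ℝ → ℂ)
    (hmap : ∀ θ ∈ Icc (0 : ℝ) (2 * π), ‖Λ θ‖ = 1)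
    (hper : Λ (2 * π) = Λ 0)
    (hBV : BoundedVariationOn Λ (Icc 0 (2 * π))) :
    (ContinuousOn Λ (Icc 0 (2 * π)) →
      ∃ γ : ℝ → ℝ, ContinuousOn γ (Icc 0 (2 * π)) ∧
        BoundedVariationOn γ (Icc 0 (2 * π)) ∧
        (∀ θ ∈ Icc (0 : ℝ) (2 * π), Λ θ = Complex.exp (γ θ * Complex.I)) ∧
        eVariationOn γ (Icc 0 (2 * π)) ≤
          ENNReal.ofReal (3 * π / 2) * eVariationOn Λ (Icc 0 (2 * π))) ∧
    (∃ α : ℝ → ℝ, BoundedVariationOn α (Icc 0 (2 * π)) ∧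
      ∀ θ ∈ Icc (0 : ℝ) (2 * π), Λ θ = Complex.exp (α θ * Complex.I)) :=
  exists_BV_argument_general Λ hmap hBV
end
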